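/- For all (a₁,a₂) ∈ ℝ², S_ρ(a₁,a₂)² = K(X₁(a₁,a₂), X₂(a₁,a₂)). -/

import Mathlib

open Real

noncomputable section

/-- `X₁` for `G₂`. -/
def X1 (a₁ a₂ : ℝ) : ℝ :=
  2 * (Real.cos (2 * π * a₁) + Real.cos (2 * π * (a₁ - 3 * a₂)) +
    Real.cos (2 * π * (2 * a₁ - 3 * a₂)))

/-- `X₂` for `G₂`. -/
def X2 (a₁ a₂ : ℝ) : ℝ :=
  2 * (Real.cos (2 * π * a₂) + Real.cos (2 * π * (a₁ - a₂)) +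
    Real.cos (2 * π * (a₁ - 2 * a₂)))

/-- The weight polynomial `K` of `G₂`. -/
def K (y₁ y₂ : ℝ) : ℝ :=
  (y₂ ^ 2 - 4 * y₁ - 12) *
    (y₁ ^ 2 - 4 * y₂ ^ 3 + 12 * y₁ * y₂ + 24 * y₁ + 36 * y₂ + 36)

/-- The lowest antisymmetric orbit function `S_ρ` of `G₂`. -/
def Srho (a₁ a₂ : ℝ) : ℝ :=
  2 * (Real.cos (2 * π * (a₁ + a₂)) - Real.cos (2 * π * (-a₁ + 4 * a₂)) -
    Real.cos (2 * π * (2 * a₁ - a₂)) + Real.cos (2 * π * (3 * a₁ - 4 * a₂)) +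
    Real.cos (2 * π * (-2 * a₁ + 5 * a₂)) - Real.cos (2 * π * (-3 * a₁ + 5 * a₂)))

/-! With `u = e^{2πi a₁}` and `v = e^{2πi a₂}`, each `2 cos (2π (m a₁ + n a₂))` is
`u^m v^n + u^{-m} v^{-n}`. Hence `S_ρ`, `X₁`, `X₂` are Laurent polynomials in `u, v`, and the
claim becomes an identity of Laurent polynomials, which holds over every field. -/

def orbitSum {F : Type*} [DivisionRing F] (u v : F) (m n : ℤ) : F :=
  u ^ m * v ^ n + (u ^ m * v ^ n)⁻¹

theorem orbitSum_G2_sq {F : Type*} [Field F] {u v : F} (hu : u ≠ 0) (hv : v ≠ 0) :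
    (orbitSum u v 1 1 - orbitSum u v (-1) 4 - orbitSum u v 2 (-1) + orbitSum u v 3 (-4) +
        orbitSum u v (-2) 5 - orbitSum u v (-3) 5) ^ 2 =
      let y₁ := orbitSum u v 1 0 + orbitSum u v 1 (-3) + orbitSum u v 2 (-3)
      let y₂ := orbitSum u v 0 1 + orbitSum u v 1 (-1) + orbitSum u v 1 (-2)
      (y₂ ^ 2 - 4 * y₁ - 12) * (y₁ ^ 2 - 4 * y₂ ^ 3 + 12 * y₁ * y₂ + 24 * y₁ + 36 * y₂ + 36) := by
  simp only [orbitSum, zpow_neg, zpow_one, zpow_zero, Int.reduceNeg]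
  field_simp
  ring

def twoCos (a₁ a₂ : ℝ) (m n : ℤ) : ℝ :=
  2 * Real.cos (2 * π * (m * a₁ + n * a₂))

open Complex in
theorem ofReal_twoCos (a₁ a₂ : ℝ) (m n : ℤ) :
    (twoCos a₁ a₂ m n : ℂ) = orbitSum (cexp (2 * π * a₁ * I)) (cexp (2 * π * a₂ * I)) m n := by
  have hexp : cexp (2 * π * a₁ * I) ^ m * cexp (2 * π * a₂ * I) ^ n =
      cexp (↑(2 * π * (m * a₁ + n * a₂)) * I) := by
    rw [← exp_int_mul, ← exp_int_mul, ← Complex.exp_add]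
    push_cast
    ring_nf
  rw [twoCos, orbitSum, hexp, ← Complex.exp_neg, ← neg_mul, ofReal_mul, ofReal_cos, ofReal_ofNat,
    two_cos]

theorem X1_eq_twoCos (a₁ a₂ : ℝ) :
    X1 a₁ a₂ = twoCos a₁ a₂ 1 0 + twoCos a₁ a₂ 1 (-3) + twoCos a₁ a₂ 2 (-3) := by
  simp only [X1, twoCos]
  push_cast
  ring_nf

theorem X2_eq_twoCos (a₁ a₂ : ℝ) :
    X2 a₁ a₂ = twoCos a₁ a₂ 0 1 + twoCos a₁ a₂ 1 (-1) + twoCos a₁ a₂ 1 (-2) := by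
  simp only [X2, twoCos]
  push_cast
  ring_nf

theorem Srho_eq_twoCos (a₁ a₂ : ℝ) :
    Srho a₁ a₂ = twoCos a₁ a₂ 1 1 - twoCos a₁ a₂ (-1) 4 - twoCos a₁ a₂ 2 (-1) +
      twoCos a₁ a₂ 3 (-4) + twoCos a₁ a₂ (-2) 5 - twoCos a₁ a₂ (-3) 5 := by
  simp only [Srho, twoCos]
  push_cast
  ring_nf

/-- For `G₂`, `S_ρ² = K(X₁, X₂)` pointwise. -/
theorem Srho_sq_eq_K_G2 (a₁ a₂ : ℝ) :
    (Srho a₁ a₂) ^ 2 = K (X1 a₁ a₂) (X2 a₁ a₂) := by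
  apply Complex.ofReal_injective
  rw [Srho_eq_twoCos, K, X1_eq_twoCos, X2_eq_twoCos]
  push_cast [ofReal_twoCos]
  exact orbitSum_G2_sq (Complex.exp_ne_zero _) (Complex.exp_ne_zero _)

end
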